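/- The map θ : Λ_n → 𝔇_n^{catalan} sending λ to D(λ) is a bijection. -/

import Mathlib

def IsLambda (n : ℕ) (l : Fin n → ℕ) : Prop :=
  (∀ i j : Fin n, i ≤ j → l j ≤ l i) ∧
  (∀ i : Fin n, l i + i.val ≤ n - 1) ∧
  (∀ i : Fin n, i.val = n - 1 → l i = 0)

def aseq (n : ℕ) (l : Fin n → ℕ) (i : Fin n) : ℕ := n - 1 - i.val - l i

def bseq (n : ℕ) (l : Fin n → ℕ) (i : Fin n) : ℕ :=
  (Finset.univ.filter (fun j : Fin n => i < j ∧
    (l i + i.val = l j + j.val ∨ l i + i.val = l j + j.val + 1))).card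

def Dof (n : ℕ) (l : Fin n → ℕ) : Finset (ℕ × ℕ) :=
  Finset.image (fun i => (aseq n l i, bseq n l i)) Finset.univ

def col (D : Finset (ℕ × ℕ)) (p : ℕ) : Finset (ℕ × ℕ) :=
  D.filter (fun q => q.1 = p)

/-- Membership in `𝔇_n^{catalan}`: an `n`-element subset of `ℕ × ℕ` satisfying
conditions (a) and (b). -/
def IsCat (n : ℕ) (D : Finset (ℕ × ℕ)) : Prop :=
  D.card = n ∧
  (∀ p i : ℕ, (p, 0) ∈ D → i ≤ p → (i, 0) ∈ D) ∧
  (∀ p : ℕ,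
    ((col D p).Nonempty →
      ((col D p).image Prod.snd).sup id + 1 ≤ (col D (p + 1)).card + (col D p).card) ∧
    (col D p = ∅ → ∀ q ∈ D, q.1 < p))


/-!
With `a_i = n - 1 - λ_i - i`, the sequence `a` drops by at most one from each index to the next
and ends at `0`, so it takes every value below any of its values later on. Hence `b_i + 1` is at
most the number of points of `D(λ)` in columns `a_i` and `a_i + 1`, with equality ("saturated")
exactly when no earlier index lies in these columns. The first index gives a saturated point,
and it is the one in the leftmost column; deleting it from `D(λ)` leaves `D` of
`(λ_2, …, λ_n)`. Conversely, removing the leftmost saturated point of any `D ∈ 𝔇_n` preserves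
(a) and (b), and its column determines `λ_1`. Both injectivity and surjectivity follow by
induction on `n`.
-/

open Finset

theorem Fin.exists_eq_of_le_map_succ_add_one {n : ℕ} {f : Fin n → ℕ}
    (hf : ∀ i j : Fin n, i.val + 1 = j.val → f i ≤ f j + 1) {i j : Fin n} (hij : i ≤ j)
    {v : ℕ} (hj : f j ≤ v) (hi : v ≤ f i) : ∃ k, i ≤ k ∧ k ≤ j ∧ f k = v := by
  obtain ⟨j, hjn⟩ := j
  induction j with
  | zero =>
    have : i = ⟨0, hjn⟩ := Fin.ext (Nat.le_zero.mp hij)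
    subst this
    exact ⟨_, le_rfl, le_rfl, le_antisymm hj hi⟩
  | succ j ih =>
    by_cases hv : f ⟨j + 1, hjn⟩ = v
    · exact ⟨_, hij, le_rfl, hv⟩
    have hstep := hf ⟨j, by omega⟩ ⟨j + 1, hjn⟩ rfl
    have hij' : i ≤ ⟨j, by omega⟩ := by
      have hi_ne : i ≠ ⟨j + 1, hjn⟩ := by
        rintro rfl
        exact hv (le_antisymm hj hi)
      rw [Fin.le_iff_val_le_val] at hij ⊢
      have := Fin.val_ne_of_ne hi_ne
      simp only at hij this ⊢
      omega
    obtain ⟨k, hik, hkj, hk⟩ := ih (by omega) hij' (by omega)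
    exact ⟨k, hik, hkj.trans (Fin.le_iff_val_le_val.mpr (by simp)), hk⟩

lemma mem_Dof {n : ℕ} {l : Fin n → ℕ} {q : ℕ × ℕ} :
    q ∈ Dof n l ↔ ∃ i, (aseq n l i, bseq n l i) = q := by
  simp [Dof]

def band (n : ℕ) (l : Fin n → ℕ) (p : ℕ) : Finset (Fin n) :=
  {j | aseq n l j = p ∨ aseq n l j = p + 1}

namespace IsLambda

variable {n : ℕ} {l : Fin n → ℕ}

lemma aseq_add (hl : IsLambda n l) (i : Fin n) : aseq n l i + (l i + i) = n - 1 := by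
  have := hl.2.1 i
  unfold aseq
  omega

lemma aseq_le_aseq_succ_add_one (hl : IsLambda n l) {i j : Fin n} (h : i.val + 1 = j.val) :
    aseq n l i ≤ aseq n l j + 1 := by
  have := hl.1 i j (Fin.le_iff_val_le_val.mpr (by omega))
  have := hl.aseq_add i
  have := hl.aseq_add j
  omega

lemma exists_aseq_eq_of_le (hl : IsLambda n l) (j : Fin n) {p : ℕ} (hp : p ≤ aseq n l j) :
    ∃ k, j ≤ k ∧ aseq n l k = p := by
  have := j.isLt
  let last : Fin n := ⟨n - 1, by omega⟩
  have hlast : aseq n l last = 0 := by simp [last, aseq, hl.2.2 last rfl]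
  obtain ⟨k, hjk, -, hk⟩ := Fin.exists_eq_of_le_map_succ_add_one
    (fun _ _ => hl.aseq_le_aseq_succ_add_one) (Fin.le_iff_val_le_val.mpr (by simp [last]; omega))
    (hlast ▸ Nat.zero_le p) hp
  exact ⟨k, hjk, hk⟩

lemma mem_band_aseq (i : Fin n) : i ∈ band n l (aseq n l i) := by
  simp [band]

lemma bseq_eq_card (hl : IsLambda n l) (i : Fin n) :
    bseq n l i = #{j ∈ band n l (aseq n l i) | i < j} := by
  unfold bseq band
  rw [filter_filter]
  congr 1
  refine filter_congr fun j _ => ?_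
  have := hl.aseq_add i
  have := hl.aseq_add j
  omega

lemma card_band_aseq (hl : IsLambda n l) (i : Fin n) :
    #(band n l (aseq n l i)) = bseq n l i + 1 + #{j ∈ band n l (aseq n l i) | j < i} := by
  have hsplit : {j ∈ band n l (aseq n l i) | i ≤ j} =
      insert i {j ∈ band n l (aseq n l i) | i < j} := by
    ext j
    rcases eq_or_ne j i with rfl | hji
    · simp [mem_band_aseq]
    · simp [hji, hji.symm, le_iff_eq_or_lt]
  rw [← card_filter_add_card_filter_not (s := band n l (aseq n l i)) (i ≤ ·), hsplit,
    card_insert_of_notMem (by simp), hl.bseq_eq_card]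
  simp only [not_le]

lemma bseq_lt_bseq (hl : IsLambda n l) {i j : Fin n} (hij : i < j)
    (ha : aseq n l i = aseq n l j) : bseq n l j < bseq n l i := by
  rw [hl.bseq_eq_card, hl.bseq_eq_card, ← ha]
  refine card_lt_card ((ssubset_iff_of_subset fun k hk => ?_).mpr ⟨j, ?_, ?_⟩)
  · simp only [mem_filter] at hk ⊢
    exact ⟨hk.1, hij.trans hk.2⟩
  · simp only [mem_filter]
    exact ⟨ha ▸ mem_band_aseq j, hij⟩
  · simp

lemma injective_point (hl : IsLambda n l) :
    Function.Injective fun i => (aseq n l i, bseq n l i) := by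
  intro i j h
  simp only [Prod.mk.injEq] at h
  by_contra hne
  rcases lt_or_gt_of_ne hne with hij | hji
  · exact (hl.bseq_lt_bseq hij h.1).ne h.2.symm
  · exact (hl.bseq_lt_bseq hji h.1.symm).ne h.2

lemma card_Dof (hl : IsLambda n l) : #(Dof n l) = n := by
  rw [Dof, card_image_of_injective _ hl.injective_point, card_univ, Fintype.card_fin]

end IsLambda

def colPairCard (D : Finset (ℕ × ℕ)) (p : ℕ) : ℕ := #(col D p) + #(col D (p + 1))

/-- Condition (b) of `IsCat`, unfolded pointwise. -/
structure IsCatalanSet (N : ℕ) (D : Finset (ℕ × ℕ)) : Prop where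
  card_eq : #D = N
  zero_closed : ∀ p i, (p, 0) ∈ D → i ≤ p → (i, 0) ∈ D
  snd_lt : ∀ q ∈ D, q.2 < colPairCard D q.1
  col_nonempty : ∀ q ∈ D, ∀ p ≤ q.1, (col D p).Nonempty

def IsSaturated (D : Finset (ℕ × ℕ)) (q : ℕ × ℕ) : Prop :=
  q ∈ D ∧ q.2 + 1 = colPairCard D q.1

section Columns

variable {D : Finset (ℕ × ℕ)} {p : ℕ} {q : ℕ × ℕ}

lemma mem_col : q ∈ col D p ↔ q ∈ D ∧ q.1 = p := mem_filter

lemma card_col_insert (hq : q ∉ D) :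
    #(col (insert q D) p) = #(col D p) + if q.1 = p then 1 else 0 := by
  rw [col, filter_insert]
  split_ifs
  · rw [card_insert_of_notMem (by simp [hq])]
    rfl
  · rfl

lemma colPairCard_insert (hq : q ∉ D) :
    colPairCard (insert q D) p =
      colPairCard D p + (if q.1 = p then 1 else 0) + if q.1 = p + 1 then 1 else 0 := by
  rw [colPairCard, colPairCard, card_col_insert hq, card_col_insert hq]
  omega

lemma isSaturated_insert_iff (hq : q ∉ D) :
    IsSaturated (insert q D) q ↔ q.2 = colPairCard D q.1 := by
  simp [IsSaturated, colPairCard_insert hq]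

lemma colPairCard_erase_add_one (hq : q ∈ D) (hp : q.1 = p ∨ q.1 = p + 1) :
    colPairCard (D.erase q) p + 1 = colPairCard D p := by
  conv_rhs => rw [← insert_erase hq, colPairCard_insert (notMem_erase q D)]
  split_ifs <;> omega

lemma colPairCard_erase_of_ne (hq : q ∈ D) (hp : q.1 ≠ p) (hp' : q.1 ≠ p + 1) :
    colPairCard (D.erase q) p = colPairCard D p := by
  conv_rhs => rw [← insert_erase hq, colPairCard_insert (notMem_erase q D)]
  simp [hp, hp']

lemma IsSaturated.eq_of_fst_eq {q' : ℕ × ℕ} (hq : IsSaturated D q) (hq' : IsSaturated D q')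
    (h : q.1 = q'.1) : q = q' :=
  Prod.ext h (by have hsat := hq.2; have hsat' := hq'.2; rw [h] at hsat; omega)

end Columns

lemma isCat_iff_isCatalanSet {N : ℕ} {D : Finset (ℕ × ℕ)} :
    IsCat N D ↔ IsCatalanSet N D := by
  constructor
  · rintro ⟨hcard, hzero, hcol⟩
    refine ⟨hcard, hzero, fun q hq => ?_, fun q hq p hp => ?_⟩
    · have hq' : q ∈ col D q.1 := mem_col.mpr ⟨hq, rfl⟩
      have hsup := (hcol q.1).1 ⟨q, hq'⟩
      have hle : q.2 ≤ ((col D q.1).image Prod.snd).sup id :=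
        le_sup (f := id) (mem_image_of_mem _ hq')
      rw [colPairCard]
      omega
    · by_contra h
      have := (hcol p).2 (not_nonempty_iff_eq_empty.mp h) q hq
      omega
  · rintro ⟨hcard, hzero, hlt, hcol⟩
    refine ⟨hcard, hzero, fun p => ⟨fun hne => ?_, fun hemp q hq => ?_⟩⟩
    · obtain ⟨b, hb, hsup⟩ := exists_mem_eq_sup _ (hne.image Prod.snd) id
      obtain ⟨q, hq, rfl⟩ := mem_image.mp hb
      obtain ⟨hqD, rfl⟩ := mem_col.mp hq
      have := hlt q hqD
      rw [colPairCard] at this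
      rw [hsup, id]
      omega
    · by_contra h
      exact not_nonempty_empty (hemp ▸ hcol q hq p (not_lt.mp h))

lemma IsSaturated.col_succ_eq_empty {D : Finset (ℕ × ℕ)} {q : ℕ × ℕ}
    (hq : IsSaturated D q) (h : q.2 = 0) : col D (q.1 + 1) = ∅ := by
  have hpos : 0 < #(col D q.1) := card_pos.mpr ⟨q, mem_col.mpr ⟨hq.1, rfl⟩⟩
  have := hq.2
  rw [colPairCard] at this
  exact card_eq_zero.mp (by omega)

lemma exists_last_col {D : Finset (ℕ × ℕ)} (hne : D.Nonempty) :
    ∃ P, (col D P).Nonempty ∧ col D (P + 1) = ∅ ∧ ∀ q ∈ D, q.1 ≤ P := by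
  obtain ⟨r, hr, hmax⟩ := D.exists_max_image Prod.fst hne
  refine ⟨r.1, ⟨r, mem_col.mpr ⟨hr, rfl⟩⟩,
    eq_empty_of_forall_notMem fun q hq => ?_, hmax⟩
  have := hmax q (mem_col.mp hq).1
  have := (mem_col.mp hq).2
  omega

namespace IsCatalanSet

variable {N : ℕ} {D : Finset (ℕ × ℕ)}

lemma lt_of_col_eq_empty (hD : IsCatalanSet N D) {p : ℕ} (hp : col D p = ∅) {q : ℕ × ℕ}
    (hq : q ∈ D) : q.1 < p := by
  by_contra h
  exact not_nonempty_empty (hp ▸ hD.col_nonempty q hq p (not_lt.mp h))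

lemma mem_of_lt_card_col (hD : IsCatalanSet N D) {P : ℕ} (hP : col D (P + 1) = ∅) {k : ℕ}
    (hk : k < #(col D P)) : (P, k) ∈ D := by
  have hsub : (col D P).image Prod.snd ⊆ range #(col D P) := fun b hb => by
    obtain ⟨q, hq, rfl⟩ := mem_image.mp hb
    obtain ⟨hqD, rfl⟩ := mem_col.mp hq
    have := hD.snd_lt q hqD
    rw [colPairCard, hP, card_empty] at this
    exact mem_range.mpr this
  have hinj : Set.InjOn Prod.snd (col D P : Set (ℕ × ℕ)) := fun q hq q' hq' h =>
    Prod.ext ((mem_col.mp hq).2.trans (mem_col.mp hq').2.symm) h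
  have heq := eq_of_subset_of_card_le hsub (by rw [card_range, card_image_of_injOn hinj])
  have hk' : k ∈ (col D P).image Prod.snd := heq ▸ mem_range.mpr hk
  obtain ⟨q, hq, hqk⟩ := mem_image.mp hk'
  obtain ⟨hqD, hqP⟩ := mem_col.mp hq
  rwa [← hqP, ← hqk]

lemma mk_fst_zero_mem (hD : IsCatalanSet N D) {q : ℕ × ℕ} (hq : q ∈ D) : (q.1, 0) ∈ D := by
  obtain ⟨P, hne, hP, hmax⟩ := exists_last_col ⟨q, hq⟩
  exact hD.zero_closed P q.1 (hD.mem_of_lt_card_col hP (card_pos.mpr hne)) (hmax q hq)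

lemma fst_lt (hD : IsCatalanSet N D) {q : ℕ × ℕ} (hq : q ∈ D) : q.1 < N := by
  have hsub : (range (q.1 + 1)).image (·, 0) ⊆ D := fun x hx => by
    obtain ⟨i, hi, rfl⟩ := mem_image.mp hx
    exact hD.zero_closed q.1 i (hD.mk_fst_zero_mem hq) (Nat.lt_succ_iff.mp (mem_range.mp hi))
  have := card_le_card hsub
  rw [card_image_of_injective _ (Prod.mk_left_injective 0), card_range, hD.card_eq] at this
  omega

lemma exists_isSaturated_min (hD : IsCatalanSet N D) (hne : D.Nonempty) :
    ∃ q, IsSaturated D q ∧ ∀ q', IsSaturated D q' → q.1 ≤ q'.1 := by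
  classical
  have hex : ∃ p, ∃ q, IsSaturated D q ∧ q.1 = p := by
    obtain ⟨P, hne, hP, -⟩ := exists_last_col hne
    have hpos := card_pos.mpr hne
    refine ⟨P, (P, #(col D P) - 1), ⟨hD.mem_of_lt_card_col hP (by omega), ?_⟩, rfl⟩
    rw [colPairCard, hP, card_empty]
    dsimp only
    omega
  obtain ⟨q, hq, hqp⟩ := Nat.find_spec hex
  exact ⟨q, hq, fun q' hq' => hqp ▸ Nat.find_min' hex ⟨q', hq', rfl⟩⟩

variable {pt : ℕ × ℕ}

lemma snd_lt_colPairCard_erase (hD : IsCatalanSet N D) (hpt : IsSaturated D pt)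
    (hmin : ∀ q, IsSaturated D q → pt.1 ≤ q.1) {q : ℕ × ℕ} (hq : q ∈ D.erase pt) :
    q.2 < colPairCard (D.erase pt) q.1 := by
  obtain ⟨hne, hqD⟩ := mem_erase.mp hq
  have hlt := hD.snd_lt q hqD
  by_cases h0 : pt.1 = q.1
  · have := colPairCard_erase_add_one hpt.1 (Or.inl h0)
    have hsnd : q.2 ≠ pt.2 := fun h => hne (Prod.ext h0.symm h)
    have := hpt.2
    rw [h0] at this
    omega
  by_cases h1 : pt.1 = q.1 + 1
  · have := colPairCard_erase_add_one hpt.1 (Or.inr h1)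
    have hunsat : ¬IsSaturated D q := fun h => by have := hmin q h; omega
    simp only [IsSaturated, hqD, true_and] at hunsat
    omega
  · rwa [colPairCard_erase_of_ne hpt.1 h0 h1]

lemma erase (hD : IsCatalanSet (N + 1) D) (hpt : IsSaturated D pt)
    (hmin : ∀ q, IsSaturated D q → pt.1 ≤ q.1) : IsCatalanSet N (D.erase pt) := by
  refine ⟨?_, fun p i hp hip => ?_, fun q hq => hD.snd_lt_colPairCard_erase hpt hmin hq,
    fun q hq p hp => ?_⟩
  · rw [card_erase_of_mem hpt.1, hD.card_eq]
    rfl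
  · obtain ⟨hp_ne, hpD⟩ := mem_erase.mp hp
    refine mem_erase.mpr ⟨fun h => hp_ne ?_, hD.zero_closed p i hpD hip⟩
    have hempty := hpt.col_succ_eq_empty (by rw [← h])
    have := hD.lt_of_col_eq_empty hempty hpD
    rw [← h] at this ⊢
    congr 1
    omega
  · obtain ⟨hq_ne, hqD⟩ := mem_erase.mp hq
    by_cases hpp : pt.1 = p
    · by_contra hemp
      have hzero : (pt.1, 0) = pt := by
        by_contra h
        exact hemp
          ⟨(pt.1, 0), mem_col.mpr ⟨mem_erase.mpr ⟨h, hD.mk_fst_zero_mem hpt.1⟩, hpp⟩⟩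
      have := hD.lt_of_col_eq_empty (hpt.col_succ_eq_empty (by rw [← hzero])) hqD
      exact hemp ⟨q, mem_col.mpr ⟨hq, by omega⟩⟩
    · obtain ⟨r, hr⟩ := hD.col_nonempty q hqD p hp
      obtain ⟨hrD, rfl⟩ := mem_col.mp hr
      exact ⟨r, mem_col.mpr ⟨mem_erase.mpr ⟨fun h => hpp (h ▸ rfl), hrD⟩, rfl⟩⟩

end IsCatalanSet

namespace IsLambda

variable {n : ℕ} {l : Fin n → ℕ}

lemma colPairCard_Dof (hl : IsLambda n l) (p : ℕ) : colPairCard (Dof n l) p = #(band n l p) := by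
  have hcol : ∀ p, #(col (Dof n l) p) = #{i | aseq n l i = p} := fun p => by
    rw [col, Dof, filter_image, card_image_of_injective _ hl.injective_point]
  rw [colPairCard, hcol, hcol, band, filter_or, card_union_of_disjoint]
  exact disjoint_filter.mpr fun _ _ h => by omega

lemma bseq_lt_colPairCard (hl : IsLambda n l) (i : Fin n) :
    bseq n l i < colPairCard (Dof n l) (aseq n l i) := by
  rw [colPairCard_Dof hl, card_band_aseq hl]
  omega

lemma isSaturated_Dof_iff (hl : IsLambda n l) (i : Fin n) :
    IsSaturated (Dof n l) (aseq n l i, bseq n l i) ↔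
      ∀ j ∈ band n l (aseq n l i), i ≤ j := by
  simp only [IsSaturated, mem_Dof, exists_apply_eq_apply, true_and, colPairCard_Dof hl,
    card_band_aseq hl, left_eq_add, card_eq_zero, filter_eq_empty_iff, not_lt]

lemma exists_bseq_eq_zero (hl : IsLambda n l) (i : Fin n) :
    ∃ k, aseq n l k = aseq n l i ∧ bseq n l k = 0 := by
  obtain ⟨k, hkmem, hmax⟩ := exists_max_image {j | aseq n l j = aseq n l i} id ⟨i, by simp⟩
  have hk : aseq n l k = aseq n l i := (mem_filter.mp hkmem).2
  refine ⟨k, hk, ?_⟩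
  rw [hl.bseq_eq_card, card_eq_zero, filter_eq_empty_iff]
  intro j hj hkj
  have hj_le : ∀ j', aseq n l j' = aseq n l i → j' ≤ k := fun j' h => hmax j' (by simp [h])
  rcases mem_filter.mp hj with ⟨-, hj | hj⟩
  · exact absurd (hj_le j (hj.trans hk)) (not_le.mpr hkj)
  · obtain ⟨k', hjk', hk'⟩ := hl.exists_aseq_eq_of_le j (p := aseq n l i) (by omega)
    exact absurd (hj_le k' hk') (not_le.mpr (hkj.trans_le hjk'))

theorem isCatalanSet_Dof (hl : IsLambda n l) : IsCatalanSet n (Dof n l) := by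
  refine ⟨hl.card_Dof, fun p i hp hip => ?_, fun q hq => ?_, fun q hq p hp => ?_⟩
  · obtain ⟨j, hj⟩ := mem_Dof.mp hp
    simp only [Prod.mk.injEq] at hj
    obtain ⟨k, -, hk⟩ := hl.exists_aseq_eq_of_le j (p := i) (by omega)
    obtain ⟨k', hk', hb⟩ := hl.exists_bseq_eq_zero k
    exact mem_Dof.mpr ⟨k', by rw [hk', hk, hb]⟩
  · obtain ⟨i, rfl⟩ := mem_Dof.mp hq
    exact hl.bseq_lt_colPairCard i
  · obtain ⟨i, rfl⟩ := mem_Dof.mp hq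
    obtain ⟨k, -, hk⟩ := hl.exists_aseq_eq_of_le i hp
    exact ⟨_, mem_col.mpr ⟨mem_Dof.mpr ⟨k, rfl⟩, hk⟩⟩

end IsLambda

section Succ

variable {m : ℕ} {l : Fin (m + 1) → ℕ}

lemma aseq_succ (i : Fin m) : aseq (m + 1) l i.succ = aseq m (Fin.tail l) i := by
  simp only [aseq, Fin.tail, Fin.val_succ]
  omega

lemma bseq_succ (i : Fin m) : bseq (m + 1) l i.succ = bseq m (Fin.tail l) i := by
  rw [bseq, Fin.card_filter_univ_succ, if_neg (by simp), bseq]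
  congr 1
  refine filter_congr fun j _ => ?_
  simp only [Fin.succ_lt_succ_iff, Fin.val_succ, Fin.tail]
  omega

lemma Dof_succ :
    Dof (m + 1) l = insert (aseq (m + 1) l 0, bseq (m + 1) l 0) (Dof m (Fin.tail l)) := by
  rw [Dof, Fin.univ_succ, cons_eq_insert, image_insert, map_eq_image, image_image, Dof]
  simp [Function.comp_def, aseq_succ, bseq_succ]

lemma IsLambda.tail (hl : IsLambda (m + 1) l) : IsLambda m (Fin.tail l) := by
  refine ⟨fun i j hij => hl.1 _ _ (Fin.succ_le_succ_iff.mpr hij), fun i => ?_, fun i hi => ?_⟩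
  · have := hl.2.1 i.succ
    simp only [Fin.val_succ] at this
    simp only [Fin.tail]
    omega
  · exact hl.2.2 i.succ (by simp [hi]; omega)

lemma IsLambda.cons {x : ℕ} {l : Fin m → ℕ} (hl : IsLambda m l) (hx : x ≤ m)
    (hle : ∀ i, l i ≤ x) : IsLambda (m + 1) (Fin.cons x l) := by
  refine ⟨fun i j hij => ?_, Fin.cases ?_ fun i => ?_, Fin.cases ?_ fun i hi => ?_⟩
  · induction j using Fin.cases with
    | zero => rw [Fin.le_zero_iff.mp hij]
    | succ j =>
      induction i using Fin.cases with
      | zero => exact hle j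
      | succ i => exact hl.1 i j (Fin.succ_le_succ_iff.mp hij)
  · simpa using hx
  · have := hl.2.1 i
    simp only [Fin.cons_succ, Fin.val_succ]
    omega
  · intro h
    simp only [Fin.val_zero, add_tsub_cancel_right] at h
    simp only [Fin.cons_zero]
    omega
  · simp only [Fin.val_succ] at hi
    exact hl.2.2 i (by omega)

lemma IsLambda.isSaturated_head (hl : IsLambda (m + 1) l) :
    IsSaturated (Dof (m + 1) l) (aseq (m + 1) l 0, bseq (m + 1) l 0) :=
  (hl.isSaturated_Dof_iff 0).mpr fun j _ => Fin.zero_le j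

lemma IsLambda.aseq_zero_le (hl : IsLambda (m + 1) l) {q : ℕ × ℕ}
    (hq : IsSaturated (Dof (m + 1) l) q) : aseq (m + 1) l 0 ≤ q.1 := by
  obtain ⟨i, rfl⟩ := mem_Dof.mp hq.1
  by_contra! h
  obtain ⟨k, -, hki, hk⟩ := Fin.exists_eq_of_le_map_succ_add_one
    (fun _ _ => hl.aseq_le_aseq_succ_add_one) (Fin.zero_le i) (Nat.le_succ _) h
  have := (hl.isSaturated_Dof_iff i).mp hq k (by simp [band, hk])
  rw [le_antisymm hki this] at hk
  omega

lemma IsLambda.head_notMem (hl : IsLambda (m + 1) l) :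
    (aseq (m + 1) l 0, bseq (m + 1) l 0) ∉ Dof m (Fin.tail l) := by
  intro h
  have := hl.card_Dof
  rw [Dof_succ, insert_eq_of_mem h, hl.tail.card_Dof] at this
  omega

lemma IsLambda.bseq_zero (hl : IsLambda (m + 1) l) :
    bseq (m + 1) l 0 = colPairCard (Dof m (Fin.tail l)) (aseq (m + 1) l 0) :=
  (isSaturated_insert_iff hl.head_notMem).mp (Dof_succ (l := l) ▸ hl.isSaturated_head)

end Succ

lemma IsSaturated.of_erase {D : Finset (ℕ × ℕ)} {pt q : ℕ × ℕ}
    (hq : IsSaturated (D.erase pt) q) (hpt : pt ∈ D) (h : pt.1 ≠ q.1) (h' : pt.1 ≠ q.1 + 1) :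
    IsSaturated D q :=
  ⟨mem_of_mem_erase hq.1, colPairCard_erase_of_ne hpt h h' ▸ hq.2⟩

/-- Otherwise the head of `l` would be a saturated point of `D` to the left of `pt`. -/
lemma IsLambda.add_fst_le_of_Dof_eq_erase {m : ℕ} {l : Fin m → ℕ} (hl : IsLambda m l)
    {D : Finset (ℕ × ℕ)} {pt : ℕ × ℕ} (hD : Dof m l = D.erase pt) (hpt : pt ∈ D)
    (hmin : ∀ q, IsSaturated D q → pt.1 ≤ q.1) (i : Fin m) : l i + pt.1 ≤ m := by
  cases m with
  | zero => exact i.elim0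
  | succ k =>
    have hhead : pt.1 ≤ aseq (k + 1) l 0 + 1 := by
      by_contra! h
      have := hmin _ ((hD ▸ hl.isSaturated_head).of_erase hpt (by omega) (by omega))
      omega
    have hadd := hl.aseq_add 0
    have hmono := hl.1 0 i (Fin.zero_le i)
    rw [Fin.val_zero] at hadd
    omega

theorem Dof_injective : ∀ {n : ℕ} {l k : Fin n → ℕ}, IsLambda n l → IsLambda n k →
    Dof n l = Dof n k → l = k
  | 0, _, _, _, _, _ => funext fun i => i.elim0
  | m + 1, l, k, hl, hk, h => by
    have hle : aseq (m + 1) l 0 ≤ aseq (m + 1) k 0 :=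
      hl.aseq_zero_le (by rw [h]; exact hk.isSaturated_head)
    have hge : aseq (m + 1) k 0 ≤ aseq (m + 1) l 0 :=
      hk.aseq_zero_le (by rw [← h]; exact hl.isSaturated_head)
    have hhead : (aseq (m + 1) l 0, bseq (m + 1) l 0) = (aseq (m + 1) k 0, bseq (m + 1) k 0) :=
      (h ▸ hl.isSaturated_head).eq_of_fst_eq hk.isSaturated_head (le_antisymm hle hge)
    have h0 : l 0 = k 0 := by
      have hl0 := hl.aseq_add 0
      have hk0 := hk.aseq_add 0
      rw [Fin.val_zero] at hl0 hk0
      omega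
    have htail : Dof m (Fin.tail l) = Dof m (Fin.tail k) :=
      calc Dof m (Fin.tail l) = (Dof (m + 1) l).erase (aseq (m + 1) l 0, bseq (m + 1) l 0) := by
            rw [Dof_succ, erase_insert hl.head_notMem]
        _ = (Dof (m + 1) k).erase (aseq (m + 1) k 0, bseq (m + 1) k 0) := by rw [h, hhead]
        _ = Dof m (Fin.tail k) := by rw [Dof_succ, erase_insert hk.head_notMem]
    rw [← Fin.cons_self_tail l, ← Fin.cons_self_tail k, h0, Dof_injective hl.tail hk.tail htail]

theorem exists_Dof_eq : ∀ {n : ℕ} {D : Finset (ℕ × ℕ)}, IsCatalanSet n D →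
    ∃ l, IsLambda n l ∧ Dof n l = D
  | 0, D, hD => ⟨Fin.elim0, ⟨fun i => i.elim0, fun i => i.elim0, fun i => i.elim0⟩,
      by rw [card_eq_zero.mp hD.card_eq]; simp [Dof]⟩
  | m + 1, D, hD => by
    obtain ⟨pt, hpt, hmin⟩ :=
      hD.exists_isSaturated_min (card_pos.mp (hD.card_eq ▸ m.succ_pos))
    obtain ⟨l', hl', hDl'⟩ := exists_Dof_eq (hD.erase hpt hmin)
    have hpt_le : pt.1 ≤ m := Nat.lt_succ_iff.mp (hD.fst_lt hpt.1)
    have hl : IsLambda (m + 1) (Fin.cons (m - pt.1) l') :=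
      hl'.cons (Nat.sub_le _ _) fun i => by
        have := hl'.add_fst_le_of_Dof_eq_erase hDl' hpt.1 hmin i
        omega
    have ha : aseq (m + 1) (Fin.cons (m - pt.1) l') 0 = pt.1 := by
      simp only [aseq, Fin.cons_zero, Fin.val_zero]
      omega
    have hb : bseq (m + 1) (Fin.cons (m - pt.1) l') 0 = pt.2 := by
      have := colPairCard_erase_add_one hpt.1 (Or.inl rfl)
      have := hpt.2
      rw [hl.bseq_zero, Fin.tail_cons, hDl', ha]
      omega
    exact ⟨_, hl, by rw [Dof_succ, Fin.tail_cons, hDl', ha, hb, insert_erase hpt.1]⟩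

theorem stmt5_general (n : ℕ) :
    Set.BijOn (fun l => Dof n l) {l : Fin n → ℕ | IsLambda n l}
      {D : Finset (ℕ × ℕ) | IsCat n D} :=
  ⟨fun _ hl => isCat_iff_isCatalanSet.mpr (IsLambda.isCatalanSet_Dof hl),
    fun _ hl _ hk h => Dof_injective hl hk h,
    fun _ hD => exists_Dof_eq (isCat_iff_isCatalanSet.mp hD)⟩

/-- The map `θ : Λ_n → 𝔇_n^{catalan}`, `λ ↦ D(λ)`, is a bijection. -/
theorem stmt5 (n : ℕ) (hn : 1 ≤ n) :
    Set.BijOn (fun l => Dof n l) {l : Fin n → ℕ | IsLambda n l}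
      {D : Finset (ℕ × ℕ) | IsCat n D} :=
  stmt5_general n
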